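/- arXiv:2006.15878 — 2 statements merged into one kernel-verified Lean document; each statement's English description precedes it below -/
import Mathlib

section
/- Let γ : ℝ → ℂ be a C² curve that is L-periodic (L > 0), injective on [0, L), parametrized by arclength (‖γ'(s)‖ = 1 for all s), with signed curvature k(s) = Im(conj(γ'(s)) · γ''(s)) satisfying 0 ≤ k(s) ≤ λ for a constant λ > 0 and all s. Then for every s₀ ∈ ℝ, the closed disc of radius 1/λ centered at γ(s₀) + (1/λ)·i·γ'(s₀) (the disc of radius 1/λ tangent to the curve at γ(s₀) on the side of the leftward normal) is contained in the convex hull of the image of γ. -/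
open Complex ComplexConjugate Set Module Function
open scoped Real

/-!
If a point `p` of the disc with centre `c` lay outside the convex hull of the curve, which is
compact and hence closed, a unit vector `u` would separate `p` from it. So it suffices to find a
point of the curve with `⟪u, γ s₁⟫ ≥ ⟪u, c⟫ + 1/λ`. Rotate so that `⟪u, ·⟫` becomes `Im` and
write `γ' = exp (i θ)` with `θ' = k ≥ 0`. The height `Im γ + cos θ / λ` of the centre of the
tangent disc has derivative `sin θ (1 - k/λ)`, so it does not decrease while `θ ∈ [0, π]`.
A closed curve cannot keep its direction in `[0, π)` for a whole period, so `θ` reaches `π`,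
where the curve lies exactly `1/λ` above the centre of its tangent disc. The case
`θ ∈ [-π, 0]` follows by reflecting the curve.
-/

section CompactConvexHull

variable {E : Type*} [NormedAddCommGroup E] [NormedSpace ℝ E] [FiniteDimensional ℝ E] {s : Set E}

theorem exists_fin_finrank_succ_of_mem_convexHull {x : E} (hx : x ∈ convexHull ℝ s) :
    ∃ w : Fin (finrank ℝ E + 1) → ℝ, ∃ z : Fin (finrank ℝ E + 1) → E,
      w ∈ stdSimplex ℝ _ ∧ (∀ i, z i ∈ s) ∧ ∑ i, w i • z i = x := by
  obtain ⟨x₀, hx₀⟩ := convexHull_nonempty_iff.1 ⟨x, hx⟩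
  obtain ⟨ι, _, z, w, hzs, hind, hpos, hsum, rfl⟩ := eq_pos_convex_span_of_mem_convexHull hx
  have hcard : Fintype.card ι ≤ Fintype.card (Fin (finrank ℝ E + 1)) := by
    simpa using hind.card_le_finrank_succ.trans
      (Nat.succ_le_succ (Submodule.finrank_le (vectorSpan ℝ (range z))))
  obtain ⟨e⟩ := Function.Embedding.nonempty_of_card_le hcard
  refine ⟨Function.extend e w 0, Function.extend e z fun _ => x₀, ⟨fun j => ?_, ?_⟩, fun j => ?_,
    ?_⟩
  · by_cases hj : ∃ i, e i = j
    · obtain ⟨i, rfl⟩ := hj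
      simpa [e.injective.extend_apply] using (hpos i).le
    · simp [Function.extend_apply' _ _ _ hj]
  · rw [← hsum]
    exact (Fintype.sum_of_injective e e.injective _ _
      (fun j hj => by simp [Function.extend_apply' _ _ _ hj])
      fun i => by simp [e.injective.extend_apply]).symm
  · by_cases hj : ∃ i, e i = j
    · obtain ⟨i, rfl⟩ := hj
      simpa [e.injective.extend_apply] using hzs (mem_range_self i)
    · simpa [Function.extend_apply' _ _ _ hj]
  · exact (Fintype.sum_of_injective e e.injective _ _
      (fun j hj => by simp [Function.extend_apply' _ _ _ hj])
      fun i => by simp [e.injective.extend_apply]).symm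

theorem IsCompact.convexHull_of_finiteDimensional (hs : IsCompact s) :
    IsCompact (convexHull ℝ s) := by
  have himage : convexHull ℝ s = (fun p : (Fin (finrank ℝ E + 1) → ℝ) × (Fin _ → E) =>
      ∑ i, p.1 i • p.2 i) '' (stdSimplex ℝ _ ×ˢ univ.pi fun _ => s) := by
    refine Subset.antisymm (fun x hx => ?_) ?_
    · obtain ⟨w, z, hw, hz, rfl⟩ := exists_fin_finrank_succ_of_mem_convexHull hx
      exact ⟨(w, z), ⟨hw, fun i _ => hz i⟩, rfl⟩
    · rintro _ ⟨⟨w, z⟩, ⟨hw, hz⟩, rfl⟩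
      exact (convex_convexHull ℝ s).sum_mem (fun i _ => hw.1 i) hw.2
        fun i _ => subset_convexHull ℝ s (hz i (mem_univ i))
  rw [himage]
  exact ((isCompact_stdSimplex _ _).prod (isCompact_univ_pi fun _ => hs)).image (by fun_prop)

end CompactConvexHull

theorem closedBall_subset_of_forall_inner_le {E : Type*} [NormedAddCommGroup E]
    [InnerProductSpace ℝ E] [CompleteSpace E] {K : Set E} (hconv : Convex ℝ K)
    (hclosed : IsClosed K) (hne : K.Nonempty) {c : E} {r : ℝ}
    (hsupp : ∀ u : E, ‖u‖ = 1 → ∃ x ∈ K, inner ℝ u c + r ≤ inner ℝ u x) :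
    Metric.closedBall c r ⊆ K := by
  intro p hp
  by_contra hpK
  obtain ⟨f, a, hfK, hfp⟩ := geometric_hahn_banach_closed_point hconv hclosed hpK
  set v := (InnerProductSpace.toDual ℝ E).symm f
  have hf : ∀ y, f y = inner ℝ v y := fun y => InnerProductSpace.toDual_symm_apply.symm
  have hv : v ≠ 0 := by
    rintro hv
    obtain ⟨x₀, hx₀⟩ := hne
    have := hfK x₀ hx₀
    simp only [hf, hv, inner_zero_left] at this hfp
    linarith
  have hnv : 0 < ‖v‖ := norm_pos_iff.2 hv
  set u := ‖v‖⁻¹ • v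
  have hu : ‖u‖ = 1 := by simp [u, norm_smul, hnv.ne']
  have hfu : ∀ y, f y = ‖v‖ * inner ℝ u y := fun y => by
    rw [hf, real_inner_smul_left, mul_inv_cancel_left₀ hnv.ne']
  obtain ⟨x, hxK, hx⟩ := hsupp u hu
  have hpx : inner ℝ u p ≤ inner ℝ u x := calc
    inner ℝ u p = inner ℝ u c + inner ℝ u (p - c) := by rw [inner_sub_right]; ring
    _ ≤ inner ℝ u c + ‖p - c‖ := by
      grw [real_inner_le_norm u (p - c), hu, one_mul]
    _ ≤ inner ℝ u c + r := by grw [← mem_closedBall_iff_norm.1 hp]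
    _ ≤ inner ℝ u x := hx
  have := hfK x hxK
  rw [hfu] at this hfp
  nlinarith

theorem re_conj_mul_eq_zero_of_norm_eq_one {u u' : ℝ → ℂ} (hu : ∀ s, HasDerivAt u (u' s) s)
    (hnorm : ∀ s, ‖u s‖ = 1) (s : ℝ) : (conj (u s) * u' s).re = 0 := by
  have hconst : HasDerivAt (‖u ·‖ ^ 2) 0 s := by
    simpa [hnorm] using hasDerivAt_const s (1 : ℝ)
  have h := (hu s).norm_sq.unique hconst
  rw [Complex.inner, mul_comm (u' s)] at h
  linarith

theorem exists_angle_of_norm_eq_one {u u' : ℝ → ℂ} (hu : ∀ s, HasDerivAt u (u' s) s)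
    (hu' : Continuous u') (hnorm : ∀ s, ‖u s‖ = 1) (s₀ : ℝ) :
    ∃ θ : ℝ → ℝ, θ s₀ = arg (u s₀) ∧ (∀ s, HasDerivAt θ (conj (u s) * u' s).im s) ∧
      ∀ s, u s = exp (θ s * I) := by
  set k : ℝ → ℝ := fun s => (conj (u s) * u' s).im
  have hk : Continuous k := by
    have : Continuous u := continuous_iff_continuousAt.2 fun s => (hu s).continuousAt
    fun_prop
  set θ : ℝ → ℝ := fun s => arg (u s₀) + ∫ t in s₀..s, k t
  have hθ : ∀ s, HasDerivAt θ (k s) s := fun s =>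
    ((hk.integral_hasStrictDerivAt s₀ s).hasDerivAt).const_add _
  have hu'_eq : ∀ s, u' s = u s * (k s * I) := fun s => by
    have hconj : conj (u s) * u' s = k s * I := Complex.ext
      (by simp [re_conj_mul_eq_zero_of_norm_eq_one hu hnorm s]) (by simp [k])
    rw [← hconj, ← mul_assoc, mul_conj', hnorm, ofReal_one, one_pow, one_mul]
  have hrot : ∀ s, HasDerivAt (fun t => u t * exp (-(θ t * I))) 0 s := fun s => by
    refine ((hu s).mul ((hθ s).ofReal_comp.mul_const I).neg.cexp).congr_deriv ?_
    rw [hu'_eq]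
    ring
  refine ⟨θ, by simp [θ], hθ, fun s => ?_⟩
  have h := is_const_of_deriv_eq_zero (fun t => (hrot t).differentiableAt)
    (fun t => (hrot t).deriv) s s₀
  have hs₀ : u s₀ * exp (-(θ s₀ * I)) = 1 := by
    have := norm_mul_exp_arg_mul_I (u s₀)
    rw [hnorm, ofReal_one, one_mul] at this
    simp only [θ, intervalIntegral.integral_same, add_zero]
    nth_rewrite 1 [← this]
    rw [← exp_add, add_neg_cancel, exp_zero]
  rw [hs₀] at h
  calc u s = u s * exp (-(θ s * I)) * exp (θ s * I) := by rw [mul_assoc, ← exp_add]; simp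
    _ = exp (θ s * I) := by rw [h, one_mul]

theorem Function.Periodic.eq_zero_of_hasDerivAt_nonneg {g g' : ℝ → ℝ} {L a s : ℝ}
    (hper : Periodic g L) (hg : ∀ x, HasDerivAt g (g' x) x)
    (hnn : ∀ x ∈ Ioo a (a + L), 0 ≤ g' x) (hs : s ∈ Ioo a (a + L)) : g' s = 0 := by
  have hmono : MonotoneOn g (Icc a (a + L)) :=
    monotoneOn_of_hasDerivWithinAt_nonneg (convex_Icc _ _)
      (fun x _ => (hg x).continuousAt.continuousWithinAt) (fun x _ => (hg x).hasDerivWithinAt)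
      (by rwa [interior_Icc])
  have hL : 0 ≤ L := by linarith [hs.1, hs.2]
  have hconst : ∀ x ∈ Icc a (a + L), g x = g a := fun x hx => le_antisymm
    (hper a ▸ hmono hx (right_mem_Icc.2 (by linarith)) hx.2)
    (hmono (left_mem_Icc.2 (by linarith)) hx hx.1)
  have hloc : g =ᶠ[nhds s] fun _ => g a :=
    Filter.eventually_of_mem (Ioo_mem_nhds hs.1 hs.2) fun x hx =>
      hconst x (Ioo_subset_Icc_self hx)
  exact (hg s).unique ((hasDerivAt_const s (g a)).congr_of_eventuallyEq hloc)

section AngleFunction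

variable {z : ℝ → ℂ} {φ k : ℝ → ℝ} {L lam : ℝ}

theorem HasDerivAt.im_of_exp_mul_I {θ s : ℝ} (hz : HasDerivAt z (Complex.exp (θ * I)) s) :
    HasDerivAt (fun t => (z t).im) (Real.sin θ) s := by
  rw [← exp_ofReal_mul_I_im]
  exact imCLM.hasFDerivAt.comp_hasDerivAt s hz

theorem HasDerivAt.re_of_exp_mul_I {θ s : ℝ} (hz : HasDerivAt z (Complex.exp (θ * I)) s) :
    HasDerivAt (fun t => (z t).re) (Real.cos θ) s := by
  rw [← exp_ofReal_mul_I_re]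
  exact reCLM.hasFDerivAt.comp_hasDerivAt s hz

theorem im_add_cos_div_le_of_sin_nonneg {a b : ℝ} (hlam : 0 < lam) (hab : a ≤ b)
    (hz : ∀ s, HasDerivAt z (exp (φ s * I)) s) (hφ : ∀ s, HasDerivAt φ (k s) s)
    (hk : ∀ s, k s ≤ lam) (hsin : ∀ s ∈ Ioo a b, 0 ≤ Real.sin (φ s)) :
    (z a).im + Real.cos (φ a) / lam ≤ (z b).im + Real.cos (φ b) / lam := by
  have hE : ∀ s, HasDerivAt (fun t => (z t).im + Real.cos (φ t) / lam)
      (Real.sin (φ s) * (1 - k s / lam)) s := fun s =>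
    ((hz s).im_of_exp_mul_I.add
      (((Real.hasDerivAt_cos _).comp s (hφ s)).div_const lam)).congr_deriv (by ring)
  refine monotoneOn_of_hasDerivWithinAt_nonneg (convex_Icc a b)
    (fun s _ => (hE s).continuousAt.continuousWithinAt) (fun s _ => (hE s).hasDerivWithinAt)
    (fun s hs => ?_) (left_mem_Icc.2 hab) (right_mem_Icc.2 hab) hab
  rw [interior_Icc] at hs
  exact mul_nonneg (hsin s hs) (sub_nonneg.2 ((div_le_one hlam).2 (hk s)))

theorem exists_pi_le_of_monotone_angle (hL : 0 < L) (hz : ∀ s, HasDerivAt z (exp (φ s * I)) s)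
    (hper : Periodic z L) (hφ : Monotone φ) {s₀ : ℝ} (hφ₀ : 0 ≤ φ s₀) :
    ∃ s₂, s₀ ≤ s₂ ∧ π ≤ φ s₂ := by
  by_contra! hlt
  have hrange : ∀ s ∈ Ioo s₀ (s₀ + L), 0 ≤ φ s ∧ φ s < π := fun s hs =>
    ⟨hφ₀.trans (hφ hs.1.le), hlt s hs.1.le⟩
  have hzero : ∀ s ∈ Ioo s₀ (s₀ + L), φ s = 0 := fun s hs => by
    have hsin := (hper.comp Complex.im).eq_zero_of_hasDerivAt_nonneg
      (fun x => (hz x).im_of_exp_mul_I)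
      (fun x hx => Real.sin_nonneg_of_nonneg_of_le_pi (hrange x hx).1 (hrange x hx).2.le) hs
    exact (Real.sin_eq_zero_iff_of_lt_of_lt (by linarith [(hrange s hs).1, Real.pi_pos])
      (hrange s hs).2).1 hsin
  have hmid : s₀ + L / 2 ∈ Ioo s₀ (s₀ + L) := ⟨by linarith, by linarith⟩
  have hcos := (hper.comp Complex.re).eq_zero_of_hasDerivAt_nonneg
    (g' := fun x => Real.cos (φ x)) (fun x => (hz x).re_of_exp_mul_I)
    (fun x hx => by rw [hzero x hx, Real.cos_zero]; exact zero_le_one) hmid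
  rw [hzero _ hmid, Real.cos_zero] at hcos
  exact one_ne_zero hcos

theorem exists_im_ge_of_angle_mem_Icc_zero_pi (hL : 0 < L) (hlam : 0 < lam)
    (hz : ∀ s, HasDerivAt z (exp (φ s * I)) s) (hper : Periodic z L)
    (hφ : ∀ s, HasDerivAt φ (k s) s) (hk0 : ∀ s, 0 ≤ k s) (hk : ∀ s, k s ≤ lam) {s₀ : ℝ}
    (hφ₀ : φ s₀ ∈ Icc 0 π) : ∃ s₁, (z s₀).im + (1 + Real.cos (φ s₀)) / lam ≤ (z s₁).im := by
  have hmono : Monotone φ := monotone_of_hasDerivAt_nonneg hφ hk0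
  obtain ⟨s₂, hs₀₂, hπ⟩ := exists_pi_le_of_monotone_angle hL hz hper hmono hφ₀.1
  obtain ⟨s₁, hs₁, hφs₁⟩ : π ∈ φ '' Icc s₀ s₂ :=
    intermediate_value_Icc hs₀₂ (fun s _ => (hφ s).continuousAt.continuousWithinAt) ⟨hφ₀.2, hπ⟩
  refine ⟨s₁, ?_⟩
  have hE := im_add_cos_div_le_of_sin_nonneg hlam hs₁.1 hz hφ hk fun s hs =>
    Real.sin_nonneg_of_nonneg_of_le_pi (hφ₀.1.trans (hmono hs.1.le)) (hφs₁ ▸ hmono hs.2.le)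
  rw [hφs₁, Real.cos_pi] at hE
  linarith [add_div 1 (Real.cos (φ s₀)) lam, neg_div lam 1]

theorem exists_im_ge_of_angle_mem_Icc (hL : 0 < L) (hlam : 0 < lam)
    (hz : ∀ s, HasDerivAt z (exp (φ s * I)) s) (hper : Periodic z L)
    (hφ : ∀ s, HasDerivAt φ (k s) s) (hk0 : ∀ s, 0 ≤ k s) (hk : ∀ s, k s ≤ lam) {s₀ : ℝ}
    (hφ₀ : φ s₀ ∈ Icc (-π) π) : ∃ s₁, (z s₀).im + (1 + Real.cos (φ s₀)) / lam ≤ (z s₁).im := by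
  rcases le_total 0 (φ s₀) with hφ₀' | hφ₀'
  · exact exists_im_ge_of_angle_mem_Icc_zero_pi hL hlam hz hper hφ hk0 hk ⟨hφ₀', hφ₀.2⟩
  -- The mirrored curve `s ↦ -conj (z (-s))` has the same heights `Im`, angle `s ↦ -φ (-s)` and
  -- curvature `s ↦ k (-s)`, and its angle at `-s₀` lies in `[0, π]`.
  have hz' : ∀ s, HasDerivAt (fun t => -conj (z (-t))) (exp (↑(-φ (-s)) * I)) s :=
    fun s => (((hz (-s)).scomp s (hasDerivAt_neg s)).star.neg).congr_deriv
      (by simp [← exp_conj])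
  have hper' : Periodic (fun t => -conj (z (-t))) L := fun s => by
    simp only [neg_add, ← sub_eq_add_neg, hper.sub_eq]
  have hφ' : ∀ s, HasDerivAt (fun t => -φ (-t)) (k (-s)) s :=
    fun s => ((hφ (-s)).scomp s (hasDerivAt_neg s)).neg.congr_deriv (by simp)
  obtain ⟨s₁, hs₁⟩ := exists_im_ge_of_angle_mem_Icc_zero_pi hL hlam hz' hper' hφ'
    (fun s => hk0 (-s)) (fun s => hk (-s)) (s₀ := -s₀)
    ⟨by simpa using hφ₀', by simpa [neg_le] using hφ₀.1⟩
  exact ⟨-s₁, by simpa using hs₁⟩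

end AngleFunction

theorem exists_im_ge_of_curvature_le {z z' z'' : ℝ → ℂ} {L lam : ℝ} (hL : 0 < L)
    (hlam : 0 < lam) (hz : ∀ s, HasDerivAt z (z' s) s) (hz' : ∀ s, HasDerivAt z' (z'' s) s)
    (hz'' : Continuous z'') (hper : Periodic z L) (hunit : ∀ s, ‖z' s‖ = 1)
    (hcurv : ∀ s, 0 ≤ (conj (z' s) * z'' s).im ∧ (conj (z' s) * z'' s).im ≤ lam) (s₀ : ℝ) :
    ∃ s₁, (z s₀ + I * z' s₀ / lam).im + 1 / lam ≤ (z s₁).im := by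
  obtain ⟨θ, hθ₀, hθ, hz'θ⟩ := exists_angle_of_norm_eq_one hz' hz'' hunit s₀
  obtain ⟨s₁, hs₁⟩ := exists_im_ge_of_angle_mem_Icc hL hlam (fun s => hz'θ s ▸ hz s) hper hθ
    (fun s => (hcurv s).1) (fun s => (hcurv s).2)
    (hθ₀ ▸ ⟨(neg_pi_lt_arg _).le, arg_le_pi _⟩ : θ s₀ ∈ Icc (-π) π)
  refine ⟨s₁, le_of_eq_of_le ?_ hs₁⟩
  rw [hz'θ s₀]
  simp only [add_im, div_ofReal_im, mul_im, I_re, I_im, exp_ofReal_mul_I_re,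
    exp_ofReal_mul_I_im]
  ring

theorem exists_inner_ge_of_curvature_le {γ : ℝ → ℂ} {L lam : ℝ} (hL : 0 < L) (hlam : 0 < lam)
    (hC2 : ContDiff ℝ 2 γ) (hper : Periodic γ L) (hunit : ∀ s, ‖deriv γ s‖ = 1)
    (hcurv : ∀ s, 0 ≤ (conj (deriv γ s) * deriv (deriv γ) s).im ∧
      (conj (deriv γ s) * deriv (deriv γ) s).im ≤ lam) (s₀ : ℝ) {u : ℂ} (hu : ‖u‖ = 1) :
    ∃ s₁, inner ℝ u (γ s₀ + ((1 / lam : ℝ) : ℂ) * I * deriv γ s₀) + 1 / lam ≤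
      inner ℝ u (γ s₁) := by
  have hC1 : ContDiff ℝ 1 (deriv γ) := (contDiff_succ_iff_deriv.1 hC2).2.2
  have hγ' : ∀ s, HasDerivAt γ (deriv γ s) s := fun s =>
    (hC2.differentiable two_ne_zero s).hasDerivAt
  have hγ'' : ∀ s, HasDerivAt (deriv γ) (deriv (deriv γ) s) s := fun s =>
    (hC1.differentiable one_ne_zero s).hasDerivAt
  -- Rotating by `a` turns `⟪u, ·⟫` into `Im`, and preserves speed and curvature.
  set a := I * conj u
  have ha : ‖a‖ = 1 := by simp [a, hu]
  have hinner : ∀ x, inner ℝ u x = (a * x).im := fun x => by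
    simp [a, Complex.inner, mul_comm]
  obtain ⟨s₁, hs₁⟩ := exists_im_ge_of_curvature_le (z := fun s => a * γ s) hL hlam
    (fun s => (hγ' s).const_mul a) (fun s => (hγ'' s).const_mul a)
    (continuous_const.mul (hC1.continuous_deriv le_rfl)) (fun s => by simp only [hper s])
    (fun s => by rw [norm_mul, hunit, ha, mul_one])
    (fun s => by
      rw [map_mul, mul_mul_mul_comm, conj_mul', ha, ofReal_one, one_pow, one_mul]
      exact hcurv s) s₀
  refine ⟨s₁, ?_⟩
  rw [hinner, hinner]
  refine le_of_eq_of_le ?_ hs₁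
  congr 2
  push_cast
  ring

theorem blaschke_rolling_II_general (γ : ℝ → ℂ) (L lam : ℝ) (hL : 0 < L) (hlam : 0 < lam)
    (hC2 : ContDiff ℝ 2 γ) (hper : Function.Periodic γ L)
    (hunit : ∀ s : ℝ, ‖deriv γ s‖ = 1)
    (hcurv : ∀ s : ℝ,
      0 ≤ ((starRingEnd ℂ) (deriv γ s) * deriv (deriv γ) s).im ∧
      ((starRingEnd ℂ) (deriv γ s) * deriv (deriv γ) s).im ≤ lam) :
    ∀ s₀ : ℝ,
      Metric.closedBall (γ s₀ + (1 / lam : ℝ) * Complex.I * deriv γ s₀) (1 / lam)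
        ⊆ convexHull ℝ (Set.range γ) := by
  intro s₀
  have hcompact : IsCompact (range γ) := hper.compact_of_continuous hL.ne' hC2.continuous
  refine closedBall_subset_of_forall_inner_le (convex_convexHull ℝ _)
    hcompact.convexHull_of_finiteDimensional.isClosed
    ((range_nonempty γ).mono (subset_convexHull ℝ _)) fun u hu => ?_
  obtain ⟨s₁, hs₁⟩ := exists_inner_ge_of_curvature_le hL hlam hC2 hper hunit hcurv s₀ hu
  exact ⟨γ s₁, subset_convexHull ℝ _ (mem_range_self s₁), hs₁⟩

/-- **Blaschke's rolling theorem, part II.** For a closed unit-speed `C²` plane curve whose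
signed curvature satisfies `0 ≤ k ≤ lam`, the closed disc of radius `1/lam` tangent to the
curve at any of its points (on the side of the leftward normal) is contained in the convex
hull of the image of the curve. -/
theorem blaschke_rolling_II (γ : ℝ → ℂ) (L lam : ℝ) (hL : 0 < L) (hlam : 0 < lam)
    (hC2 : ContDiff ℝ 2 γ) (hper : Function.Periodic γ L)
    (hinj : Set.InjOn γ (Set.Ico 0 L))
    (hunit : ∀ s : ℝ, ‖deriv γ s‖ = 1)
    (hcurv : ∀ s : ℝ,
      0 ≤ ((starRingEnd ℂ) (deriv γ s) * deriv (deriv γ) s).im ∧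
      ((starRingEnd ℂ) (deriv γ s) * deriv (deriv γ) s).im ≤ lam) :
    ∀ s₀ : ℝ,
      Metric.closedBall (γ s₀ + (1 / lam : ℝ) * Complex.I * deriv γ s₀) (1 / lam)
        ⊆ convexHull ℝ (Set.range γ) :=
  blaschke_rolling_II_general γ L lam hL hlam hC2 hper hunit hcurv
end

section
/- Let λ > 0 and let h : ℝ → ℝ be a twice differentiable 2π-periodic function with h(0) = 0 and h'(0) = 0, such that for all φ the quantity R(φ) := h(φ) + h''(φ) satisfies 0 ≤ R(φ) ≤ 1/λ. Then h(φ) ≤ (1/λ)·(1 − cos φ) for all φ ∈ [0, 2π]. -/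
/-!
The gap `g = (1/λ)(1 - cos) - h` between the support function of the tangent disc and `h`
satisfies `g + g'' = 1/λ - R ≥ 0`, and by periodicity `g` and `g'` vanish at both `0` and `2π`.
This is a Sturm comparison with `sin`: for `|x - a| ≤ π` the function
`F t = g' t * sin (x - t) + g t * cos (x - t)` has derivative `(g + g'') t * sin (x - t)`, whose
sign is constant between `a` and `x`, so `g x = F x ≥ F a = 0`. Take `a = 0` for `φ ∈ [0, π]` and
`a = 2π` for `φ ∈ [π, 2π]`.
-/

open Real Set

theorem Function.Periodic.deriv {𝕜 F : Type*} [NontriviallyNormedField 𝕜] [NormedAddCommGroup F]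
    [NormedSpace 𝕜 F] {f : 𝕜 → F} {c : 𝕜} (hf : Function.Periodic f c) :
    Function.Periodic (deriv f) c := fun x ↦ by
  rw [← deriv_comp_add_const, hf.funext]

section SturmComparison

variable {g g' g'' : ℝ → ℝ}

theorem hasDerivAt_mul_sin_sub_add_mul_cos_sub (hg : ∀ t, HasDerivAt g (g' t) t)
    (hg' : ∀ t, HasDerivAt g' (g'' t) t) (x t : ℝ) :
    HasDerivAt (fun s ↦ g' s * sin (x - s) + g s * cos (x - s))
      ((g t + g'' t) * sin (x - t)) t := by
  have hsub := (hasDerivAt_id' t).const_sub x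
  exact (((hg' t).mul hsub.sin).add ((hg t).mul hsub.cos)).congr_deriv (by ring)

theorem nonneg_of_add_second_deriv_nonneg (hg : ∀ t, HasDerivAt g (g' t) t)
    (hg' : ∀ t, HasDerivAt g' (g'' t) t) {a x : ℝ} (hga : g a = 0) (hg'a : g' a = 0)
    (hxa : |x - a| ≤ π) (hpos : ∀ t ∈ uIcc a x, 0 ≤ g t + g'' t) : 0 ≤ g x := by
  set F : ℝ → ℝ := fun s ↦ g' s * sin (x - s) + g s * cos (x - s)
  have hF := hasDerivAt_mul_sin_sub_add_mul_cos_sub hg hg' x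
  have hFa : F a = 0 := by simp [F, hga, hg'a]
  have hFx : F x = g x := by simp [F]
  obtain ⟨hxa₁, hxa₂⟩ := abs_le.1 hxa
  rw [← hFx, ← hFa]
  rcases le_total a x with hax | hxa'
  · refine monotoneOn_of_hasDerivWithinAt_nonneg (convex_Icc a x) (HasDerivAt.continuousOn fun t _ ↦ hF t)
      (fun t _ ↦ (hF t).hasDerivWithinAt) (fun t ht ↦ ?_) (left_mem_Icc.2 hax)
      (right_mem_Icc.2 hax) hax
    rw [interior_Icc] at ht
    exact mul_nonneg (hpos t (Icc_subset_uIcc (Ioo_subset_Icc_self ht)))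
      (sin_nonneg_of_nonneg_of_le_pi (by linarith [ht.2]) (by linarith [ht.1]))
  · refine antitoneOn_of_hasDerivWithinAt_nonpos (convex_Icc x a) (HasDerivAt.continuousOn fun t _ ↦ hF t)
      (fun t _ ↦ (hF t).hasDerivWithinAt) (fun t ht ↦ ?_) (left_mem_Icc.2 hxa')
      (right_mem_Icc.2 hxa') hxa'
    rw [interior_Icc] at ht
    exact mul_nonpos_of_nonneg_of_nonpos (hpos t (Icc_subset_uIcc' (Ioo_subset_Icc_self ht)))
      (sin_nonpos_of_nonpos_of_neg_pi_le (by linarith [ht.1]) (by linarith [ht.2]))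

end SturmComparison

theorem support_function_estimate_general (lam : ℝ) (h : ℝ → ℝ)
    (hdiff : Differentiable ℝ h) (hdiff2 : Differentiable ℝ (deriv h))
    (hper : Function.Periodic h (2 * π))
    (h0 : h 0 = 0) (h0' : deriv h 0 = 0)
    (hR : ∀ φ : ℝ, 0 ≤ h φ + deriv (deriv h) φ ∧ h φ + deriv (deriv h) φ ≤ 1 / lam) :
    ∀ φ ∈ Set.Icc (0 : ℝ) (2 * π), h φ ≤ (1 / lam) * (1 - Real.cos φ) := by
  intro φ ⟨hφ₀, hφ₂⟩
  set c := 1 / lam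
  have hg (t : ℝ) : HasDerivAt (fun s ↦ c * (1 - cos s) - h s) (c * sin t - deriv h t) t :=
    ((((hasDerivAt_cos t).const_sub 1).const_mul c).sub (hdiff t).hasDerivAt).congr_deriv
      (by ring)
  have hg' (t : ℝ) :
      HasDerivAt (fun s ↦ c * sin s - deriv h s) (c * cos t - deriv (deriv h) t) t :=
    ((hasDerivAt_sin t).const_mul c).sub (hdiff2 t).hasDerivAt
  have hpos (t : ℝ) : 0 ≤ (c * (1 - cos t) - h t) + (c * cos t - deriv (deriv h) t) := by
    linarith [(hR t).2]
  suffices 0 ≤ c * (1 - cos φ) - h φ by linarith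
  rcases le_total φ π with hφπ | hπφ
  · refine nonneg_of_add_second_deriv_nonneg hg hg' (a := 0) (by simp [h0]) (by simp [h0'])
      ?_ fun t _ ↦ hpos t
    rwa [sub_zero, abs_of_nonneg hφ₀]
  · have h2π : h (2 * π) = 0 := by simpa [h0] using hper 0
    have h2π' : deriv h (2 * π) = 0 := by simpa [h0'] using hper.deriv 0
    refine nonneg_of_add_second_deriv_nonneg hg hg' (a := 2 * π) (by simp [h2π])
      (by simp [h2π']) ?_ fun t _ ↦ hpos t
    rw [abs_sub_comm, abs_of_nonneg (by linarith)]
    linarith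

/-- **Support-function estimate in Lemma 1(I).** If `h` is a twice differentiable
`2π`-periodic function with `h 0 = 0`, `h' 0 = 0` and `0 ≤ h + h'' ≤ 1/lam`, then
`h φ ≤ (1/lam) * (1 - cos φ)` on `[0, 2π]`. -/
theorem support_function_estimate (lam : ℝ) (hlam : 0 < lam) (h : ℝ → ℝ)
    (hdiff : Differentiable ℝ h) (hdiff2 : Differentiable ℝ (deriv h))
    (hper : Function.Periodic h (2 * π))
    (h0 : h 0 = 0) (h0' : deriv h 0 = 0)
    (hR : ∀ φ : ℝ, 0 ≤ h φ + deriv (deriv h) φ ∧ h φ + deriv (deriv h) φ ≤ 1 / lam) :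
    ∀ φ ∈ Set.Icc (0 : ℝ) (2 * π), h φ ≤ (1 / lam) * (1 - Real.cos φ) :=
  support_function_estimate_general lam h hdiff hdiff2 hper h0 h0' hR
end
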